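/- arXiv:2109.02698 — 3 statements merged into one kernel-verified Lean document; each statement's English description precedes it below -/
import Mathlib

section
/- Let p be a prime, r a positive integer, F a finite field with p^r elements, and n ≥ 3. Let H_n(F) be the subgroup of Up_n(F) of unitriangular matrices whose (i,j) entry is 0 for all 2 ≤ i < j ≤ n−1, and let K be the subgroup of Up_n(F) of unitriangular matrices M with M_{1,j} = 0 for all j > 1 and M_{i,n} = 0 for all i < n. Then H_n(F) is a normal subgroup of Up_n(F), H_n(F) ∩ K is trivial, and H_n(F)·K = Up_n(F); moreover K is isomorphic to Up_{n−2}(F). (Thus Up_n(F) is the internal semidirect product H_n(F) ⋊ Up_{n−2}(F).) -/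
open Matrix

/-- `M` is an upper unitriangular matrix. -/
def IsUnitriangular {n : ℕ} {F : Type} [Field F]
    (M : Matrix (Fin n) (Fin n) F) : Prop :=
  (∀ i, M i i = 1) ∧ ∀ i j : Fin n, j < i → M i j = 0

/-- `M` belongs to the Heisenberg subgroup of `Up_n(F)`. -/
def IsHeisenberg {n : ℕ} {F : Type} [Field F]
    (M : Matrix (Fin n) (Fin n) F) : Prop :=
  IsUnitriangular M ∧
    ∀ i j : Fin n, 1 ≤ (i : ℕ) → (i : ℕ) < (j : ℕ) → (j : ℕ) < n - 1 → M i j = 0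

/-- `M` belongs to the complement `K`: it is unitriangular, its first row vanishes off
the diagonal, and its last column vanishes off the diagonal. -/
def IsComplementK {n : ℕ} {F : Type} [Field F]
    (M : Matrix (Fin n) (Fin n) F) : Prop :=
  IsUnitriangular M ∧
    (∀ i j : Fin n, (i : ℕ) = 0 → (j : ℕ) ≠ 0 → M i j = 0) ∧
    (∀ i j : Fin n, (j : ℕ) = n - 1 → (i : ℕ) ≠ n - 1 → M i j = 0)

/-!
Deleting the first and last rows and columns, `M ↦ innerBlock M`, is multiplicative on upper
triangular matrices: in `(A * B) i j` with `i, j` inner indices, the terms through the indices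
`0` and `n - 1` vanish. It is therefore a homomorphism `Up_n(F) → Up_{n-2}(F)` whose kernel is
`H_n(F)`, and it maps `K` bijectively onto `Up_{n-2}(F)`, the inverse bordering a matrix by the
identity. A homomorphism with kernel `H` that restricts to an isomorphism on `K` exhibits `U` as
`H ⋊ K`.
-/

namespace Matrix

variable {ι R : Type*} [Fintype ι] [LinearOrder ι]

theorem IsUpperTriangular.mul_apply_self [NonUnitalNonAssocSemiring R] {A B : Matrix ι ι R}
    (hA : A.IsUpperTriangular) (hB : B.IsUpperTriangular) (i : ι) :
    (A * B) i i = A i i * B i i := by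
  refine (mul_apply ..).trans (Finset.sum_eq_single i (fun k _ hki => ?_) (by simp))
  rcases hki.lt_or_gt with hki | hki
  · rw [hA hki, zero_mul]
  · rw [hB hki, mul_zero]

end Matrix

section Unitriangular

variable {n : ℕ} {F : Type} [Field F]

theorem isUnitriangular_iff {M : Matrix (Fin n) (Fin n) F} :
    IsUnitriangular M ↔ M.IsUpperTriangular ∧ ∀ i, M i i = 1 :=
  ⟨fun h => ⟨fun _ _ => h.2 _ _, h.1⟩, fun h => ⟨h.2, fun _ _ => @h.1 _ _⟩⟩

theorem isUnitriangular_one : IsUnitriangular (1 : Matrix (Fin n) (Fin n) F) :=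
  ⟨fun _ => one_apply_eq _, fun _ _ h => one_apply_ne h.ne'⟩

theorem IsUnitriangular.mul {A B : Matrix (Fin n) (Fin n) F} (hA : IsUnitriangular A)
    (hB : IsUnitriangular B) : IsUnitriangular (A * B) := by
  rw [isUnitriangular_iff] at *
  refine ⟨hA.1.mul hB.1, fun i => ?_⟩
  rw [hA.1.mul_apply_self hB.1, hA.2, hB.2, one_mul]

theorem IsUnitriangular.det_eq_one {M : Matrix (Fin n) (Fin n) F} (hM : IsUnitriangular M) :
    M.det = 1 := by
  rw [det_of_isUpperTriangular (isUnitriangular_iff.1 hM).1]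
  simp [hM.1]

theorem IsUnitriangular.isUnit {M : Matrix (Fin n) (Fin n) F} (hM : IsUnitriangular M) :
    IsUnit M :=
  (isUnit_iff_isUnit_det M).2 (by simp [hM.det_eq_one])

theorem IsUnitriangular.inv {M : Matrix (Fin n) (Fin n) F} (hM : IsUnitriangular M) :
    IsUnitriangular M⁻¹ := by
  have hdet : IsUnit M.det := by simp [hM.det_eq_one]
  have := M.invertibleOfIsUnitDet hdet
  rw [isUnitriangular_iff] at *
  have hinv : M⁻¹.IsUpperTriangular := blockTriangular_inv_of_blockTriangular hM.1
  refine ⟨hinv, fun i => ?_⟩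
  have hdiag := congr_fun₂ (M.mul_nonsing_inv hdet) i i
  rwa [hM.1.mul_apply_self hinv, hM.2, one_mul, one_apply_eq] at hdiag

variable (n F) in
def unitriangularGroup : Subgroup (GL (Fin n) F) where
  carrier := {M | IsUnitriangular (M : Matrix (Fin n) (Fin n) F)}
  mul_mem' := IsUnitriangular.mul
  one_mem' := isUnitriangular_one
  inv_mem' {M} (hM : IsUnitriangular _) := by
    show IsUnitriangular _
    rw [coe_units_inv]
    exact hM.inv

end Unitriangular

section InnerBlock

variable {m : ℕ} {α : Type*}

theorem Fin.eq_zero_or_eq_last_or_eq_castSucc_succ (i : Fin (m + 2)) :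
    i = 0 ∨ i = Fin.last _ ∨ ∃ k : Fin m, i = k.castSucc.succ := by
  rcases i with ⟨_ | k, hk⟩
  · exact Or.inl rfl
  · by_cases hkm : k = m
    · exact Or.inr (Or.inl (Fin.ext (by simp [hkm])))
    · exact Or.inr (Or.inr ⟨⟨k, by omega⟩, rfl⟩)

theorem Fin.castSucc_succ_lt_last (k : Fin m) : k.castSucc.succ < Fin.last (m + 1) := by
  rw [Fin.lt_def]
  simp

def innerBlock (M : Matrix (Fin (m + 2)) (Fin (m + 2)) α) : Matrix (Fin m) (Fin m) α :=
  M.submatrix (fun i => i.castSucc.succ) (fun i => i.castSucc.succ)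

@[simp]
theorem innerBlock_apply (M : Matrix (Fin (m + 2)) (Fin (m + 2)) α) (i j : Fin m) :
    innerBlock M i j = M i.castSucc.succ j.castSucc.succ :=
  rfl

theorem innerBlock_one [Zero α] [One α] :
    innerBlock (1 : Matrix (Fin (m + 2)) (Fin (m + 2)) α) = 1 :=
  submatrix_one _ fun _ _ h => Fin.succ_injective _ (Fin.castSucc_injective _ h)

theorem innerBlock_mul [NonUnitalNonAssocSemiring α] {A B : Matrix (Fin (m + 2)) (Fin (m + 2)) α}
    (hA : A.IsUpperTriangular) (hB : B.IsUpperTriangular) :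
    innerBlock (A * B) = innerBlock A * innerBlock B := by
  ext i j
  have hA0 : A i.castSucc.succ 0 = 0 := hA (Fin.succ_pos _)
  have hBl : B (Fin.last _) j.castSucc.succ = 0 := hB (Fin.castSucc_succ_lt_last j)
  rw [innerBlock_apply, mul_apply, Fin.sum_univ_succ, Fin.sum_univ_castSucc]
  simp [hA0, hBl, mul_apply]

def extendBlock [Zero α] [One α] (N : Matrix (Fin m) (Fin m) α) :
    Matrix (Fin (m + 2)) (Fin (m + 2)) α :=
  Matrix.of fun i j =>
    if h : 0 < (i : ℕ) ∧ (i : ℕ) ≤ m ∧ 0 < (j : ℕ) ∧ (j : ℕ) ≤ m then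
      N ⟨i - 1, by omega⟩ ⟨j - 1, by omega⟩
    else (1 : Matrix (Fin (m + 2)) (Fin (m + 2)) α) i j

section ExtendBlock

variable [Zero α] [One α] (N : Matrix (Fin m) (Fin m) α)

@[simp]
theorem extendBlock_zero_left (j : Fin (m + 2)) :
    extendBlock N 0 j = (1 : Matrix (Fin (m + 2)) (Fin (m + 2)) α) 0 j := by
  simp [extendBlock]

@[simp]
theorem extendBlock_zero_right (i : Fin (m + 2)) :
    extendBlock N i 0 = (1 : Matrix (Fin (m + 2)) (Fin (m + 2)) α) i 0 := by
  simp [extendBlock]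

@[simp]
theorem extendBlock_last_left (j : Fin (m + 2)) :
    extendBlock N (Fin.last _) j = (1 : Matrix (Fin (m + 2)) (Fin (m + 2)) α) (Fin.last _) j := by
  simp [extendBlock]

@[simp]
theorem extendBlock_last_right (i : Fin (m + 2)) :
    extendBlock N i (Fin.last _) = (1 : Matrix (Fin (m + 2)) (Fin (m + 2)) α) i (Fin.last _) := by
  simp [extendBlock]

@[simp]
theorem extendBlock_castSucc_succ (k l : Fin m) :
    extendBlock N k.castSucc.succ l.castSucc.succ = N k l := by
  simp [extendBlock]

theorem innerBlock_extendBlock : innerBlock (extendBlock N) = N := by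
  ext i j
  simp

end ExtendBlock

end InnerBlock

section Blocks

variable {m : ℕ} {F : Type} [Field F]

theorem IsUnitriangular.innerBlock {M : Matrix (Fin (m + 2)) (Fin (m + 2)) F}
    (hM : IsUnitriangular M) : IsUnitriangular (innerBlock M) :=
  ⟨fun _ => hM.1 _, fun _ _ h => hM.2 _ _ (by simpa using h)⟩

theorem isHeisenberg_iff {M : Matrix (Fin (m + 2)) (Fin (m + 2)) F} :
    IsHeisenberg M ↔ IsUnitriangular M ∧ innerBlock M = 1 := by
  refine and_congr_right fun hM => ⟨fun h => ?_, fun h i j hi hij hj => ?_⟩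
  · ext i j
    rcases lt_trichotomy i j with hij | rfl | hij
    · rw [one_apply_ne hij.ne]
      exact h _ _ (by simp) (by simpa using hij) (by simp)
    · simp [hM.1]
    · rw [one_apply_ne hij.ne', innerBlock_apply, hM.2 _ _ (by simpa using hij)]
  · rcases i.eq_zero_or_eq_last_or_eq_castSucc_succ with rfl | rfl | ⟨k, rfl⟩
    · simp at hi
    · simp at hij; omega
    rcases j.eq_zero_or_eq_last_or_eq_castSucc_succ with rfl | rfl | ⟨l, rfl⟩
    · simp at hij
    · simp at hj
    have hkl : k ≠ l := by rintro rfl; simp at hij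
    simpa [hkl] using congr_fun₂ h k l

theorem isComplementK_extendBlock {N : Matrix (Fin m) (Fin m) F} (hN : IsUnitriangular N) :
    IsComplementK (extendBlock N) := by
  refine ⟨⟨fun i => ?_, fun i j hji => ?_⟩, fun i j hi hj => ?_, fun i j hj hi => ?_⟩
  · rcases i.eq_zero_or_eq_last_or_eq_castSucc_succ with rfl | rfl | ⟨k, rfl⟩ <;>
      simp [hN.1]
  · rcases i.eq_zero_or_eq_last_or_eq_castSucc_succ with rfl | rfl | ⟨k, rfl⟩ <;>
    rcases j.eq_zero_or_eq_last_or_eq_castSucc_succ with rfl | rfl | ⟨l, rfl⟩ <;>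
      simp_all [one_apply_ne hji.ne', hN.2]
  · obtain rfl : i = 0 := Fin.ext hi
    rw [extendBlock_zero_left, one_apply_ne fun h => hj (by rw [← h]; rfl)]
  · obtain rfl : j = Fin.last _ := Fin.ext hj
    rw [extendBlock_last_right, one_apply_ne fun h => hi (by rw [h]; rfl)]

theorem IsComplementK.extendBlock_innerBlock {M : Matrix (Fin (m + 2)) (Fin (m + 2)) F}
    (hM : IsComplementK M) : extendBlock (innerBlock M) = M := by
  obtain ⟨⟨hdiag, hlower⟩, hrow, hcol⟩ := hM
  ext i j
  rcases i.eq_zero_or_eq_last_or_eq_castSucc_succ with rfl | rfl | ⟨k, rfl⟩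
  · rw [extendBlock_zero_left]
    rcases eq_or_ne j 0 with rfl | hj
    · rw [one_apply_eq, hdiag]
    · rw [one_apply_ne hj.symm, hrow 0 j rfl (Fin.val_ne_iff.2 hj)]
  · rw [extendBlock_last_left]
    rcases (Fin.le_last j).lt_or_eq with hj | rfl
    · rw [one_apply_ne hj.ne', hlower _ _ hj]
    · rw [one_apply_eq, hdiag]
  · have hk := (Fin.castSucc_succ_lt_last k).ne
    rcases j.eq_zero_or_eq_last_or_eq_castSucc_succ with rfl | rfl | ⟨l, rfl⟩
    · rw [extendBlock_zero_right, one_apply_ne (Fin.succ_ne_zero _), hlower _ _ (Fin.succ_pos _)]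
    · rw [extendBlock_last_right, one_apply_ne hk, hcol _ _ rfl (Fin.val_ne_iff.2 hk)]
    · rw [extendBlock_castSucc_succ, innerBlock_apply]

end Blocks

section SplitExtension

variable {G Q : Type*} [Group G] [Group Q] {U H K : Subgroup G} (φ : U →* Q)

theorem conj_mem_of_subgroupOf_eq_ker (hHU : H ≤ U) (hH : H.subgroupOf U = φ.ker) {u h : G}
    (hu : u ∈ U) (hh : h ∈ H) : u * h * u⁻¹ ∈ H := by
  have hker : (⟨h, hHU hh⟩ : U) ∈ φ.ker := hH ▸ hh
  have hconj := φ.normal_ker.conj_mem _ hker ⟨u, hu⟩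
  rw [← hH] at hconj
  exact hconj

theorem inf_eq_bot_of_injective_comp_inclusion (hH : H.subgroupOf U = φ.ker) (hKU : K ≤ U)
    (hinj : Function.Injective (φ.comp (Subgroup.inclusion hKU))) : H ⊓ K = ⊥ := by
  refine (Subgroup.eq_bot_iff_forall _).2 fun x ⟨hxH, hxK⟩ => ?_
  have hker : (⟨x, hKU hxK⟩ : U) ∈ φ.ker := hH ▸ hxH
  have hx1 := @hinj ⟨x, hxK⟩ 1 (by rw [map_one]; exact hker)
  simpa using congrArg Subtype.val hx1

theorem exists_mul_of_range_le_range_comp_inclusion (hH : H.subgroupOf U = φ.ker) (hKU : K ≤ U)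
    (hrange : φ.range ≤ (φ.comp (Subgroup.inclusion hKU)).range) {u : G} (hu : u ∈ U) :
    ∃ h ∈ H, ∃ k ∈ K, u = h * k := by
  obtain ⟨k, hk⟩ := hrange ⟨⟨u, hu⟩, rfl⟩
  have hker : (⟨u, hu⟩ * (Subgroup.inclusion hKU k)⁻¹ : U) ∈ φ.ker := by
    simpa [MonoidHom.mem_ker, mul_inv_eq_one] using hk.symm
  refine ⟨u * (k : G)⁻¹, ?_, k, k.2, by simp⟩
  rw [← hH] at hker
  exact hker

end SplitExtension

section InnerBlockHom

variable {m : ℕ} {F : Type} [Field F]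

theorem innerBlock_coe_mul (x y : unitriangularGroup (m + 2) F) :
    innerBlock (((x * y : unitriangularGroup (m + 2) F) : GL (Fin (m + 2)) F) :
        Matrix (Fin (m + 2)) (Fin (m + 2)) F) =
      innerBlock ((x : GL (Fin (m + 2)) F) : Matrix (Fin (m + 2)) (Fin (m + 2)) F) *
        innerBlock ((y : GL (Fin (m + 2)) F) : Matrix (Fin (m + 2)) (Fin (m + 2)) F) :=
  innerBlock_mul (isUnitriangular_iff.1 x.2).1 (isUnitriangular_iff.1 y.2).1

variable (m F) in
def innerBlockHom : unitriangularGroup (m + 2) F →* GL (Fin m) F where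
  toFun x :=
    { val := innerBlock ((x : GL (Fin (m + 2)) F) : Matrix (Fin (m + 2)) (Fin (m + 2)) F)
      inv := innerBlock (((x⁻¹ : unitriangularGroup (m + 2) F) : GL (Fin (m + 2)) F) :
        Matrix (Fin (m + 2)) (Fin (m + 2)) F)
      val_inv := by rw [← innerBlock_coe_mul, mul_inv_cancel]; exact innerBlock_one
      inv_val := by rw [← innerBlock_coe_mul, inv_mul_cancel]; exact innerBlock_one }
  map_one' := Units.ext innerBlock_one
  map_mul' x y := Units.ext (innerBlock_coe_mul x y)

@[simp]
theorem coe_innerBlockHom (x : unitriangularGroup (m + 2) F) :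
    (innerBlockHom m F x : Matrix (Fin m) (Fin m) F) =
      innerBlock ((x : GL (Fin (m + 2)) F) : Matrix (Fin (m + 2)) (Fin (m + 2)) F) :=
  rfl

theorem range_innerBlockHom_le : (innerBlockHom m F).range ≤ unitriangularGroup m F := by
  rintro _ ⟨x, rfl⟩
  exact IsUnitriangular.innerBlock x.2

theorem subgroupOf_eq_ker_innerBlockHom {H : Subgroup (GL (Fin (m + 2)) F)}
    (hH : ∀ M : GL (Fin (m + 2)) F,
      M ∈ H ↔ IsHeisenberg (M : Matrix (Fin (m + 2)) (Fin (m + 2)) F)) :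
    H.subgroupOf (unitriangularGroup (m + 2) F) = (innerBlockHom m F).ker := by
  ext x
  rw [Subgroup.mem_subgroupOf, hH, isHeisenberg_iff, MonoidHom.mem_ker, Units.ext_iff,
    coe_innerBlockHom]
  exact and_iff_right x.2

theorem injective_innerBlockHom_comp_inclusion {K : Subgroup (GL (Fin (m + 2)) F)}
    (hK : ∀ M : GL (Fin (m + 2)) F,
      M ∈ K ↔ IsComplementK (M : Matrix (Fin (m + 2)) (Fin (m + 2)) F))
    (hKU : K ≤ unitriangularGroup (m + 2) F) :
    Function.Injective ((innerBlockHom m F).comp (Subgroup.inclusion hKU)) := by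
  intro x y hxy
  have hblock := congrArg (fun g : GL (Fin m) F => (g : Matrix (Fin m) (Fin m) F)) hxy
  refine Subtype.ext (Units.ext ?_)
  rw [← ((hK x).1 x.2).extendBlock_innerBlock, ← ((hK y).1 y.2).extendBlock_innerBlock]
  exact congrArg extendBlock hblock

theorem range_innerBlockHom_comp_inclusion {K : Subgroup (GL (Fin (m + 2)) F)}
    (hK : ∀ M : GL (Fin (m + 2)) F,
      M ∈ K ↔ IsComplementK (M : Matrix (Fin (m + 2)) (Fin (m + 2)) F))
    (hKU : K ≤ unitriangularGroup (m + 2) F) :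
    ((innerBlockHom m F).comp (Subgroup.inclusion hKU)).range = unitriangularGroup m F := by
  refine le_antisymm (fun _ ⟨_, hx⟩ => range_innerBlockHom_le ⟨_, hx⟩) ?_
  intro g (hg : IsUnitriangular _)
  have hext := isComplementK_extendBlock hg
  refine ⟨⟨hext.1.isUnit.unit, (hK _).2 hext⟩, Units.ext ?_⟩
  exact innerBlock_extendBlock _

end InnerBlockHom

theorem unitriangular_semidirect_heisenberg_general (n : ℕ) (hn : 3 ≤ n) (F : Type) [Field F]
    (U : Subgroup (GL (Fin n) F))
    (hU : ∀ M : GL (Fin n) F, M ∈ U ↔ IsUnitriangular (M : Matrix (Fin n) (Fin n) F))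
    (H : Subgroup (GL (Fin n) F))
    (hH : ∀ M : GL (Fin n) F, M ∈ H ↔ IsHeisenberg (M : Matrix (Fin n) (Fin n) F))
    (K : Subgroup (GL (Fin n) F))
    (hK : ∀ M : GL (Fin n) F, M ∈ K ↔ IsComplementK (M : Matrix (Fin n) (Fin n) F))
    (U' : Subgroup (GL (Fin (n - 2)) F))
    (hU' : ∀ M : GL (Fin (n - 2)) F,
      M ∈ U' ↔ IsUnitriangular (M : Matrix (Fin (n - 2)) (Fin (n - 2)) F)) :
    (∀ u ∈ U, ∀ h ∈ H, u * h * u⁻¹ ∈ H) ∧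
    H ⊓ K = ⊥ ∧
    (∀ u ∈ U, ∃ h ∈ H, ∃ k ∈ K, u = h * k) ∧
    Nonempty (↥K ≃* ↥U') := by
  obtain ⟨m, rfl⟩ : ∃ m, n = m + 2 := ⟨n - 2, by omega⟩
  obtain rfl : U = unitriangularGroup (m + 2) F := Subgroup.ext hU
  obtain rfl : U' = unitriangularGroup m F := Subgroup.ext hU'
  have hHU : H ≤ unitriangularGroup (m + 2) F := fun M hM => ((hH M).1 hM).1
  have hKU : K ≤ unitriangularGroup (m + 2) F := fun M hM => ((hK M).1 hM).1
  have hker := subgroupOf_eq_ker_innerBlockHom hH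
  have hinj := injective_innerBlockHom_comp_inclusion hK hKU
  have hrange := range_innerBlockHom_comp_inclusion hK hKU
  refine ⟨fun u hu h hh => conj_mem_of_subgroupOf_eq_ker _ hHU hker hu hh,
    inf_eq_bot_of_injective_comp_inclusion _ hker hKU hinj,
    fun u hu => exists_mul_of_range_le_range_comp_inclusion _ hker hKU
      (hrange ▸ range_innerBlockHom_le) hu,
    ⟨(MonoidHom.ofInjective hinj).trans (MulEquiv.subgroupCongr hrange)⟩⟩

/-- `Up_n(F)` is the internal semidirect product `H_n(F) ⋊ Up_{n-2}(F)`: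
`H_n(F)` is normal in `Up_n(F)`, `H_n(F) ∩ K` is trivial, `H_n(F) · K = Up_n(F)`,
and `K ≅ Up_{n-2}(F)`. -/
theorem unitriangular_semidirect_heisenberg (p r n : ℕ) (hp : p.Prime) (hr : 0 < r)
    (hn : 3 ≤ n) (F : Type) [Field F] [Fintype F] (hF : Fintype.card F = p ^ r)
    (U : Subgroup (GL (Fin n) F))
    (hU : ∀ M : GL (Fin n) F, M ∈ U ↔ IsUnitriangular (M : Matrix (Fin n) (Fin n) F))
    (H : Subgroup (GL (Fin n) F))
    (hH : ∀ M : GL (Fin n) F, M ∈ H ↔ IsHeisenberg (M : Matrix (Fin n) (Fin n) F))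
    (K : Subgroup (GL (Fin n) F))
    (hK : ∀ M : GL (Fin n) F, M ∈ K ↔ IsComplementK (M : Matrix (Fin n) (Fin n) F))
    (U' : Subgroup (GL (Fin (n - 2)) F))
    (hU' : ∀ M : GL (Fin (n - 2)) F,
      M ∈ U' ↔ IsUnitriangular (M : Matrix (Fin (n - 2)) (Fin (n - 2)) F)) :
    (∀ u ∈ U, ∀ h ∈ H, u * h * u⁻¹ ∈ H) ∧
    H ⊓ K = ⊥ ∧
    (∀ u ∈ U, ∃ h ∈ H, ∃ k ∈ K, u = h * k) ∧
    Nonempty (↥K ≃* ↥U') :=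
  unitriangular_semidirect_heisenberg_general n hn F U hU H hH K hK U' hU'
end

section
/- Let r be a positive integer, F a finite field with 2^r elements, and n ≥ 2. Let D be a symmetric n×n matrix over F (Dᵀ = D). Then A·D·Aᵀ = D for every A ∈ Up_n(F) if and only if D_{i,j} = 0 for all (i,j) not in {(1,1),(1,2),(2,1)}, i.e., D = a·E_{1,1} + b·(E_{1,2} + E_{2,1}) for some a, b ∈ F. -/
/-!
For `p < q` the transvection `1 + E_{p,q}` is unitriangular, and the `(p, j)` entry of its
congruence action on `D` is `D p j + D q j` when `j ≠ p`. Invariance therefore forces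
`D q j = 0` whenever some `p < q` differs from `j`, which together with symmetry leaves only
the entries `(0,0)`, `(0,1)`, `(1,0)`.

Conversely, write `D = a e₀e₀ᵀ + b (e₀e₁ᵀ + e₁e₀ᵀ)`. A unitriangular `A` fixes `e₀` and sends
`e₁` to `e₁ + c e₀`, so `A D Aᵀ = D + 2bc e₀e₀ᵀ`, which is `D` in characteristic two.
-/

open Matrix

lemma two_eq_zero_of_card_eq_two_pow {F : Type} [Field F] [Fintype F] {r : ℕ}
    (hF : Fintype.card F = 2 ^ r) : (2 : F) = 0 := by
  have h := FiniteField.cast_card_eq_zero F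
  rw [hF, Nat.cast_pow, Nat.cast_ofNat] at h
  exact eq_zero_of_pow_eq_zero h

namespace Matrix

variable {m R : Type*} [CommRing R]

section Congruence

variable [Fintype m]

lemma mul_vecMulVec_mul_transpose (A : Matrix m m R) (u v : m → R) :
    A * vecMulVec u v * Aᵀ = vecMulVec (A *ᵥ u) (A *ᵥ v) := by
  rw [mul_vecMulVec, vecMulVec_mul, vecMul_transpose]

lemma mul_mul_transpose_eq_of_mulVec_eq (h2 : (2 : R) = 0) {A : Matrix m m R} {u v : m → R}
    (c : R) (hu : A *ᵥ u = u) (hv : A *ᵥ v = v + c • u) (a b : R) :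
    A * (a • vecMulVec u u + b • (vecMulVec u v + vecMulVec v u)) * Aᵀ =
      a • vecMulVec u u + b • (vecMulVec u v + vecMulVec v u) := by
  simp only [Matrix.mul_add, Matrix.add_mul, Matrix.mul_smul, Matrix.smul_mul,
    mul_vecMulVec_mul_transpose, hu, hv, vecMulVec_add, add_vecMulVec, vecMulVec_smul,
    smul_vecMulVec]
  have hcc : c • vecMulVec u u + c • vecMulVec u u = 0 := by
    rw [← add_smul, ← two_mul, h2, zero_mul, zero_smul]
  rw [show vecMulVec u v + c • vecMulVec u u + (vecMulVec v u + c • vecMulVec u u) =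
    vecMulVec u v + vecMulVec v u + (c • vecMulVec u u + c • vecMulVec u u) by abel,
    hcc, add_zero]

end Congruence

section Transvection

variable [DecidableEq m]

lemma transpose_transvection (i j : m) (c : R) :
    (transvection i j c)ᵀ = transvection j i c := by
  simp [transvection, transpose_single]

lemma transvection_mul_mul_transpose_apply_of_ne [Fintype m] {i j b : m} (hb : b ≠ i) (c : R)
    (D : Matrix m m R) :
    (transvection i j c * D * (transvection i j c)ᵀ) i b = D i b + c * D j b := by
  simp [transpose_transvection, hb]

end Transvection

end Matrix

section Unitriangular

variable {n : ℕ} {F : Type} [Field F]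

lemma isUnitriangular_transvection {p q : Fin n} (hpq : p < q) (c : F) :
    IsUnitriangular (transvection p q c) := by
  refine ⟨fun i => ?_, fun i j hji => ?_⟩
  · rw [transvection, Matrix.add_apply, one_apply_eq, single_apply_of_ne, add_zero]
    exact fun h => hpq.ne (h.1.trans h.2.symm)
  · rw [transvection, Matrix.add_apply, one_apply_ne hji.ne', single_apply_of_ne, add_zero]
    rintro ⟨rfl, rfl⟩
    exact hpq.not_gt hji

namespace IsUnitriangular

variable {A : Matrix (Fin n) (Fin n) F} (hA : IsUnitriangular A)
include hA

lemma mulVec_single_of_isBot {z : Fin n} (hz : IsBot z) :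
    A *ᵥ Pi.single z 1 = Pi.single z 1 := by
  ext i
  rcases eq_or_ne i z with rfl | hiz
  · simp [hA.1]
  · simp [hiz, hA.2 i z ((hz i).lt_of_ne' hiz)]

lemma mulVec_single_of_covBy {z o : Fin n} (hz : IsBot z) (hzo : z ⋖ o) :
    A *ᵥ Pi.single o 1 = Pi.single o 1 + A z o • Pi.single z 1 := by
  ext i
  rcases eq_or_ne i z with rfl | hiz
  · simp [hzo.ne]
  rcases eq_or_ne i o with rfl | hio
  · simp [hA.1, hiz]
  have hoi : o < i := (not_lt.1 (hzo.2 ((hz i).lt_of_ne' hiz))).lt_of_ne' hio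
  simp [hiz, hio, hA.2 i o hoi]

end IsUnitriangular

variable {D : Matrix (Fin n) (Fin n) F}

lemma apply_eq_zero_of_forall_isUnitriangular
    (h : ∀ A : Matrix (Fin n) (Fin n) F, IsUnitriangular A → A * D * Aᵀ = D)
    {p q j : Fin n} (hpq : p < q) (hj : j ≠ p) : D q j = 0 := by
  have hpj := congrFun₂ (h _ (isUnitriangular_transvection hpq 1)) p j
  rwa [transvection_mul_mul_transpose_apply_of_ne hj, one_mul, add_eq_left] at hpj

lemma eq_smul_single_add_of_forall_isUnitriangular (hD : Dᵀ = D)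
    (h : ∀ A : Matrix (Fin n) (Fin n) F, IsUnitriangular A → A * D * Aᵀ = D)
    {z o : Fin n} (hz : IsBot z) (hzo : z ⋖ o) :
    D = D z z • single z z 1 + D z o • (single z o 1 + single o z 1) := by
  have hsymm (i j : Fin n) : D i j = D j i := congrFun₂ hD j i
  have hzi {i : Fin n} (hi : i ≠ z) : z < i := (hz i).lt_of_ne' hi
  have hoi {i : Fin n} (hiz : i ≠ z) (hio : i ≠ o) : o < i :=
    (not_lt.1 (hzo.2 (hzi hiz))).lt_of_ne' hio
  ext i j
  simp only [Matrix.add_apply, Matrix.smul_apply, single_apply, smul_eq_mul]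
  rcases eq_or_ne i z with rfl | hiz
  · rcases eq_or_ne j i with rfl | hji
    · simp [hzo.ne']
    rcases eq_or_ne j o with rfl | hjo
    · simp [hzo.ne, hzo.ne']
    rw [hsymm, apply_eq_zero_of_forall_isUnitriangular h (hoi hji hjo) hzo.ne]
    simp [hji.symm, hjo.symm]
  rcases eq_or_ne j z with rfl | hjz
  · rcases eq_or_ne i o with rfl | hio
    · simp [hzo.ne, hzo.ne', hsymm i]
    rw [apply_eq_zero_of_forall_isUnitriangular h (hoi hiz hio) hzo.ne]
    simp [hiz.symm, hio.symm]
  rw [apply_eq_zero_of_forall_isUnitriangular h (hzi hiz) hjz]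
  simp [hiz.symm, hjz.symm]

end Unitriangular

/-- Over a field with `2 ^ r` elements, for `D` symmetric, `A * D * Aᵀ = D` for all
unitriangular `A` iff `D = a • E_{1,1} + b • (E_{1,2} + E_{2,1})` for some `a b ∈ F`. -/
theorem symmetric_fixed_by_unitriangular_char_two (r n : ℕ) (hn : 2 ≤ n)
    (F : Type) [Field F] [Fintype F] (hF : Fintype.card F = 2 ^ r)
    (D : Matrix (Fin n) (Fin n) F) (hD : Dᵀ = D) :
    (∀ A : Matrix (Fin n) (Fin n) F, IsUnitriangular A → A * D * Aᵀ = D) ↔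
      ∃ a b : F, D =
        a • Matrix.single (⟨0, by omega⟩ : Fin n) (⟨0, by omega⟩ : Fin n) (1 : F) +
        b • (Matrix.single (⟨0, by omega⟩ : Fin n) (⟨1, by omega⟩ : Fin n) (1 : F) +
             Matrix.single (⟨1, by omega⟩ : Fin n) (⟨0, by omega⟩ : Fin n) (1 : F)) := by
  set z : Fin n := ⟨0, by omega⟩
  set o : Fin n := ⟨1, by omega⟩
  have hz : IsBot z := fun i => Fin.le_def.2 i.val.zero_le
  have hzo : z ⋖ o := Fin.covBy_iff.2 (Nat.covBy_iff_add_one_eq.2 rfl)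
  refine ⟨fun h => ⟨_, _, eq_smul_single_add_of_forall_isUnitriangular hD h hz hzo⟩, ?_⟩
  rintro ⟨a, b, rfl⟩ A hA
  simp only [single_eq_single_vecMulVec_single]
  exact mul_mul_transpose_eq_of_mulVec_eq (two_eq_zero_of_card_eq_two_pow hF) (A z o)
    (hA.mulVec_single_of_isBot hz) (hA.mulVec_single_of_covBy hz hzo) a b
end

section
/- Let p be an odd prime, r a positive integer, F a finite field with p^r elements, and n ≥ 1. Let P(n,F) be the subgroup of Sp(2n,F) consisting of block matrices [[A, A·B],[0, (Aᵀ)⁻¹]] with A ∈ Up_n(F) and B symmetric. Then the center of P(n,F) is exactly the set of block matrices [[I_n, D],[0, I_n]] with D = d·E_{1,1} for d ∈ F, and this center is isomorphic to the additive group of F (hence to (ℤ/pℤ)^r). -/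
open Matrix

/-!
If `[[A, A * B], [0, (Aᵀ)⁻¹]]` is central, comparing upper right blocks in its commutation with
`[[1, C], [0, 1]]` (`C` symmetric) gives `A * C * Aᵀ = C`; for `C = E_{b,b}` this forces `A = 1`.
Commutation of `[[1, B], [0, 1]]` with `[[U, 0], [0, (Uᵀ)⁻¹]]` gives `U * B * Uᵀ = B`; for
`U = 1 + E_{1,j}` this says `B_{j,b} = 0` for `b ≠ 1` and `2 * B_{1,j} = 0`, so `B` is a multiple
of `E_{1,1}` since `p` is odd. Conversely `E_{1,1}` is fixed under these congruences because the
first column of a unitriangular matrix is `e_1`, and `d ↦ [[1, d • E_{1,1}], [0, 1]]` is an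
isomorphism from `F` onto the center.
-/

theorem two_ne_zero_of_card_eq_prime_pow {F : Type*} [Field F] [Fintype F] {p r : ℕ}
    (hp : p.Prime) (hp2 : p ≠ 2) (hF : Fintype.card F = p ^ r) : (2 : F) ≠ 0 := by
  refine Ring.two_ne_zero fun hchar => ?_
  have h_even := FiniteField.even_card_of_char_two hchar
  have h_odd : Odd (Fintype.card F) := hF ▸ (hp.odd_of_ne_two hp2).pow
  rw [Nat.odd_iff] at h_odd
  omega

theorem Units.forall_commute_iff_of_subset_range {M : Type*} [Monoid M] {S : Set M}
    (hS : S ⊆ Set.range Units.val) (u : Mˣ) :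
    (∀ v : Mˣ, ↑v ∈ S → u * v = v * u) ↔ ∀ y ∈ S, ↑u * y = y * ↑u := by
  constructor
  · intro h y hy
    obtain ⟨v, rfl⟩ := hS hy
    exact congrArg Units.val (h v hy)
  · exact fun h v hv => Units.ext (h v hv)

namespace Matrix

variable {m n R : Type*} [Fintype m] [Fintype n]

theorem toBlocks₁₂_eq_of_fromBlocks_commute [Ring R] {A A' : Matrix m m R} {X X' : Matrix m n R}
    {D D' : Matrix n n R}
    (h : fromBlocks A X 0 D * fromBlocks A' X' 0 D' = fromBlocks A' X' 0 D' * fromBlocks A X 0 D) :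
    A * X' + X * D' = A' * X + X' * D := by
  simpa [fromBlocks_multiply] using congrArg toBlocks₁₂ h

theorem mul_mul_transpose_eq_of_mul_eq_mul_transpose_inv [DecidableEq n] [CommRing R]
    {A X : Matrix n n R} (hA : IsUnit A.det) (h : A * X = X * (Aᵀ)⁻¹) : A * X * Aᵀ = X := by
  rw [h, nonsing_inv_mul_cancel_right _ _ (by rwa [det_transpose])]

theorem eq_one_of_forall_mul_single_mul_transpose [DecidableEq n] [CommRing R] {A : Matrix n n R}
    (hdiag : ∀ i, A i i = 1) (h : ∀ b, A * single b b 1 * Aᵀ = single b b 1) : A = 1 := by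
  ext a b
  have hab := congrFun (congrFun (h b) a) b
  rw [mul_apply, Finset.sum_eq_single b (fun k _ hk => by rw [mul_single_apply_of_ne (hbj := hk),
    zero_mul]) (by simp), mul_single_apply_same, transpose_apply, hdiag, mul_one, mul_one] at hab
  rw [hab, single_apply, one_apply]
  grind

def upperUnipotent [DecidableEq m] [DecidableEq n] [Ring R] :
    Multiplicative (Matrix m n R) →* (Matrix (m ⊕ n) (m ⊕ n) R)ˣ where
  toFun C :=
    { val := fromBlocks 1 C.toAdd 0 1
      inv := fromBlocks 1 (-C.toAdd) 0 1
      val_inv := by simp [fromBlocks_multiply, fromBlocks_one]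
      inv_val := by simp [fromBlocks_multiply, fromBlocks_one] }
  map_one' := Units.ext <| by simp [fromBlocks_one]
  map_mul' C C' := Units.ext <| by simp [fromBlocks_multiply, add_comm]

end Matrix

namespace IsUnitriangular

variable {n : ℕ} {F : Type} [Field F] {A : Matrix (Fin n) (Fin n) F}

theorem one : IsUnitriangular (1 : Matrix (Fin n) (Fin n) F) :=
  ⟨fun i => one_apply_eq i, fun _ _ h => one_apply_ne h.ne'⟩

theorem one_add_single {i j : Fin n} (hij : i < j) (c : F) :
    IsUnitriangular (1 + single i j c) := by
  refine ⟨fun a => ?_, fun a b hba => ?_⟩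
  · rw [Matrix.add_apply, one_apply_eq,
      single_apply_of_ne (h := fun h' => hij.ne (h'.1.trans h'.2.symm)), add_zero]
  · rw [Matrix.add_apply, one_apply_ne hba.ne', single_apply_of_ne (h := fun h' => hij.not_gt
      (by rw [h'.1, h'.2]; exact hba)), add_zero]

theorem det_eq_one_s10 (h : IsUnitriangular A) : A.det = 1 := by
  rw [det_of_isUpperTriangular h.2]
  simp [h.1]

theorem isUnit_det (h : IsUnitriangular A) : IsUnit A.det :=
  h.det_eq_one_s10 ▸ isUnit_one

theorem mul_single_of_isBot (h : IsUnitriangular A) {z : Fin n} (hz : IsBot z) (c : F) :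
    A * single z z c = single z z c := by
  ext a b
  by_cases hb : b = z
  · subst hb
    rw [mul_single_apply_same]
    rcases eq_or_ne a b with rfl | hab
    · simp [h.1]
    · rw [h.2 a b ((hz a).lt_of_ne' hab), zero_mul,
        single_apply_of_ne (h := fun h' => hab h'.1.symm)]
  · rw [mul_single_apply_of_ne (hbj := hb), single_apply_of_ne (h := fun h' => hb h'.2.symm)]

theorem single_mul_transpose_inv_of_isBot (h : IsUnitriangular A) {z : Fin n}
    (hz : IsBot z) (c : F) : single z z c * (Aᵀ)⁻¹ = single z z c := by
  have hinv : A⁻¹ * single z z c = single z z c := by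
    conv_lhs => rw [← h.mul_single_of_isBot hz c]
    exact nonsing_inv_mul_cancel_left _ _ h.isUnit_det
  rw [← transpose_nonsing_inv, ← transpose_single, ← transpose_mul, hinv, transpose_single]

end IsUnitriangular

theorem apply_eq_zero_of_one_add_single_mul_mul_transpose_eq {ι F : Type*} [Fintype ι]
    [DecidableEq ι] [Field F] (h2 : (2 : F) ≠ 0) {B : Matrix ι ι F} (hB : Bᵀ = B) {z j : ι}
    (hzj : z ≠ j) (h : (1 + single z j 1) * B * (1 + single z j 1)ᵀ = B) :
    (∀ b, b ≠ z → B j b = 0) ∧ B z j = 0 := by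
  set E := single z j (1 : F) with hE_def
  have hE : E * B + B * Eᵀ + E * B * Eᵀ = 0 := by
    rw [transpose_add, transpose_one] at h
    have : (1 + E) * B * (1 + Eᵀ) = B + (E * B + B * Eᵀ + E * B * Eᵀ) := by noncomm_ring
    rwa [this, add_eq_left] at h
  have hentry := fun b => congrFun (congrFun hE z) b
  simp only [hE_def, transpose_single, Matrix.add_apply, single_mul_apply_same, one_mul,
    Matrix.zero_apply] at hentry
  have hrow : ∀ b, b ≠ z → B j b = 0 := fun b hb => by
    simpa only [mul_single_apply_of_ne (hbj := hb), add_zero] using hentry b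
  refine ⟨hrow, ?_⟩
  have hzz := hentry z
  rw [mul_single_apply_same, mul_single_apply_same, single_mul_apply_same, hrow j hzj.symm,
    ← hB, transpose_apply, hB] at hzz
  simp only [mul_one, mul_zero, add_zero, ← two_mul] at hzz
  exact (mul_eq_zero.mp hzz).resolve_left h2

theorem eq_smul_single_of_forall_mul_mul_transpose_eq {n : ℕ} {F : Type} [Field F]
    (h2 : (2 : F) ≠ 0) {B : Matrix (Fin n) (Fin n) F} (hB : Bᵀ = B) {z : Fin n} (hz : IsBot z)
    (h : ∀ C, IsUnitriangular C → C * B * Cᵀ = B) : B = B z z • single z z 1 := by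
  have key : ∀ j, j ≠ z → (∀ b, b ≠ z → B j b = 0) ∧ B z j = 0 := fun j hj =>
    apply_eq_zero_of_one_add_single_mul_mul_transpose_eq h2 hB hj.symm
      (h _ (.one_add_single ((hz j).lt_of_ne' hj) 1))
  ext a b
  rw [Matrix.smul_apply, smul_eq_mul]
  rcases eq_or_ne a z with rfl | ha
  · rcases eq_or_ne b a with rfl | hb
    · rw [single_apply_same, mul_one]
    · rw [single_apply_of_ne (h := fun h' => hb h'.2.symm), mul_zero, (key b hb).2]
  · rw [single_apply_of_ne (h := fun h' => ha h'.1.symm), mul_zero]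
    rcases eq_or_ne b z with rfl | hb
    · rw [← hB, transpose_apply, (key a ha).2]
    · exact (key a ha).1 b hb

def symplecticSylowMatrices (n : ℕ) (F : Type) [Field F] :
    Set (Matrix (Fin n ⊕ Fin n) (Fin n ⊕ Fin n) F) :=
  {X | ∃ A B, IsUnitriangular A ∧ Bᵀ = B ∧ X = fromBlocks A (A * B) 0 (Aᵀ)⁻¹}

namespace symplecticSylowMatrices

variable {n : ℕ} {F : Type} [Field F]

theorem fromBlocks_one_mem {C : Matrix (Fin n) (Fin n) F} (hC : Cᵀ = C) :
    fromBlocks 1 C 0 1 ∈ symplecticSylowMatrices n F :=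
  ⟨1, C, .one, hC, by simp⟩

theorem fromBlocks_diagonal_mem {A : Matrix (Fin n) (Fin n) F} (hA : IsUnitriangular A) :
    fromBlocks A 0 0 (Aᵀ)⁻¹ ∈ symplecticSylowMatrices n F :=
  ⟨A, 0, hA, transpose_zero, by simp⟩

theorem subset_range_val : symplecticSylowMatrices n F ⊆ Set.range Units.val := by
  rintro _ ⟨A, B, hA, -, rfl⟩
  have hdet : IsUnit (fromBlocks A (A * B) 0 (Aᵀ)⁻¹).det := by
    simp [det_fromBlocks_zero₂₁, hA.det_eq_one_s10]
  exact ⟨((isUnit_iff_isUnit_det _).2 hdet).unit, rfl⟩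

theorem commute_fromBlocks_one_smul_single {z : Fin n} (hz : IsBot z) (d : F)
    {Y : Matrix (Fin n ⊕ Fin n) (Fin n ⊕ Fin n) F} (hY : Y ∈ symplecticSylowMatrices n F) :
    fromBlocks 1 (d • single z z 1) 0 1 * Y = Y * fromBlocks 1 (d • single z z 1) 0 1 := by
  obtain ⟨A, B, hA, -, rfl⟩ := hY
  simp only [fromBlocks_multiply, smul_single, smul_eq_mul, mul_one, one_mul, mul_zero, zero_mul,
    add_zero, hA.mul_single_of_isBot hz, hA.single_mul_transpose_inv_of_isBot hz,
    add_comm]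

theorem exists_eq_fromBlocks_one_smul_single_of_forall_commute (h2 : (2 : F) ≠ 0) {z : Fin n}
    (hz : IsBot z) {X : Matrix (Fin n ⊕ Fin n) (Fin n ⊕ Fin n) F}
    (hX : X ∈ symplecticSylowMatrices n F)
    (hcomm : ∀ Y ∈ symplecticSylowMatrices n F, X * Y = Y * X) :
    ∃ d : F, X = fromBlocks 1 (d • single z z 1) 0 1 := by
  obtain ⟨A, B, hA, hB, rfl⟩ := hX
  have hA1 : A = 1 := by
    refine eq_one_of_forall_mul_single_mul_transpose hA.1 fun b => ?_
    refine mul_mul_transpose_eq_of_mul_eq_mul_transpose_inv hA.isUnit_det ?_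
    have h := toBlocks₁₂_eq_of_fromBlocks_commute
      (hcomm _ (fromBlocks_one_mem (transpose_single b b 1)))
    rw [mul_one, one_mul, add_comm] at h
    exact add_left_cancel h
  subst hA1
  refine ⟨B z z, ?_⟩
  rw [one_mul, transpose_one, inv_one]
  congr
  refine eq_smul_single_of_forall_mul_mul_transpose_eq h2 hB hz fun C hC => ?_
  refine mul_mul_transpose_eq_of_mul_eq_mul_transpose_inv hC.isUnit_det ?_
  have h := toBlocks₁₂_eq_of_fromBlocks_commute (hcomm _ (fromBlocks_diagonal_mem hC))
  simpa using h.symm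

end symplecticSylowMatrices

namespace SymplecticSylow

variable {n : ℕ} {F : Type} [Field F] {P : Subgroup (GL (Fin n ⊕ Fin n) F)}
  (hP : ∀ M : GL (Fin n ⊕ Fin n) F, M ∈ P ↔ ↑M ∈ symplecticSylowMatrices n F)
include hP

theorem forall_mem_commute_iff (h2 : (2 : F) ≠ 0) {z : Fin n} (hz : IsBot z)
    {M : GL (Fin n ⊕ Fin n) F} (hM : M ∈ P) :
    (∀ N ∈ P, M * N = N * M) ↔
      ∃ d : F, (M : Matrix (Fin n ⊕ Fin n) (Fin n ⊕ Fin n) F) =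
        fromBlocks 1 (d • single z z 1) 0 1 := by
  simp only [hP]
  rw [Units.forall_commute_iff_of_subset_range symplecticSylowMatrices.subset_range_val]
  refine ⟨symplecticSylowMatrices.exists_eq_fromBlocks_one_smul_single_of_forall_commute h2 hz
    ((hP M).1 hM), ?_⟩
  rintro ⟨d, hd⟩ Y hY
  rw [hd]
  exact symplecticSylowMatrices.commute_fromBlocks_one_smul_single hz d hY

def transvectionHom (z : Fin n) : Multiplicative F →* P :=
  (upperUnipotent.comp (AddMonoidHom.toMultiplicative
    (LinearMap.toSpanSingleton F _ (single z z (1 : F))).toAddMonoidHom)).codRestrict P fun d =>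
      (hP _).2 (symplecticSylowMatrices.fromBlocks_one_mem (by simp [transpose_single]))

theorem transvectionHom_injective (z : Fin n) : Function.Injective (transvectionHom hP z) := by
  intro d d' h
  have := congrArg (fun M : P => ((M : GL (Fin n ⊕ Fin n) F) :
    Matrix (Fin n ⊕ Fin n) (Fin n ⊕ Fin n) F) (Sum.inl z) (Sum.inr z)) h
  simpa [transvectionHom, upperUnipotent] using this

theorem range_transvectionHom (h2 : (2 : F) ≠ 0) {z : Fin n} (hz : IsBot z) :
    (transvectionHom hP z).range = Subgroup.center P := by
  ext M
  have hcenter :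
      M ∈ Subgroup.center P ↔ ∀ N ∈ P, (M : GL (Fin n ⊕ Fin n) F) * N = N * M :=
    Subgroup.mem_center_iff.trans ⟨fun h N hN => (congrArg Subtype.val (h ⟨N, hN⟩)).symm,
      fun h N => Subtype.ext (h N N.2).symm⟩
  rw [MonoidHom.mem_range, hcenter, forall_mem_commute_iff hP h2 hz M.2]
  constructor
  · rintro ⟨d, rfl⟩
    exact ⟨d.toAdd, rfl⟩
  · rintro ⟨d, hd⟩
    exact ⟨.ofAdd d, Subtype.ext (Units.ext hd.symm)⟩

end SymplecticSylow

/-- For `p` odd, the center of the Sylow `p`-subgroup `P(n,F)` of `Sp(2n,F)` consists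
exactly of the block matrices `[[I, d • E_{1,1}],[0, I]]` with `d ∈ F`, and is
isomorphic to the additive group of `F`. -/
theorem center_symplectic_sylow (p r n : ℕ) (hp : p.Prime) (hp2 : p ≠ 2)
    (hn : 1 ≤ n) (F : Type) [Field F] [Fintype F] (hF : Fintype.card F = p ^ r)
    (P : Subgroup (GL (Fin n ⊕ Fin n) F))
    (hP : ∀ M : GL (Fin n ⊕ Fin n) F, M ∈ P ↔
      ∃ A B : Matrix (Fin n) (Fin n) F,
        IsUnitriangular A ∧ Bᵀ = B ∧
        (M : Matrix (Fin n ⊕ Fin n) (Fin n ⊕ Fin n) F) =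
          Matrix.fromBlocks A (A * B) 0 (Aᵀ)⁻¹) :
    ((fun M : GL (Fin n ⊕ Fin n) F =>
        (M : Matrix (Fin n ⊕ Fin n) (Fin n ⊕ Fin n) F)) ''
        {M : GL (Fin n ⊕ Fin n) F | M ∈ P ∧ ∀ N ∈ P, M * N = N * M} =
      {X : Matrix (Fin n ⊕ Fin n) (Fin n ⊕ Fin n) F | ∃ d : F,
        X = Matrix.fromBlocks 1
          (d • Matrix.single (⟨0, by omega⟩ : Fin n) (⟨0, by omega⟩ : Fin n) (1 : F))
          0 1}) ∧
    Nonempty (↥(Subgroup.center ↥P) ≃* Multiplicative F) := by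
  have h2 := two_ne_zero_of_card_eq_prime_pow hp hp2 hF
  set z : Fin n := ⟨0, by omega⟩
  have hz : IsBot z := fun a => Fin.mk_le_of_le_val a.val.zero_le
  have hcomm := fun {M} (hM : M ∈ P) => SymplecticSylow.forall_mem_commute_iff hP h2 hz hM
  have hrange := SymplecticSylow.range_transvectionHom hP h2 hz
  have hinj := SymplecticSylow.transvectionHom_injective hP z
  refine ⟨Set.ext fun X => ⟨?_, ?_⟩,
    ⟨(MulEquiv.subgroupCongr hrange.symm).trans (MonoidHom.ofInjective hinj).symm⟩⟩
  · rintro ⟨M, ⟨hM, hMcomm⟩, rfl⟩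
    exact (hcomm hM).1 hMcomm
  · rintro ⟨d, rfl⟩
    have hM := (SymplecticSylow.transvectionHom hP z (.ofAdd d)).2
    exact ⟨_, ⟨hM, (hcomm hM).2 ⟨d, rfl⟩⟩, rfl⟩
end
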